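/- arXiv:2211.05681 — 3 statements merged into one kernel-verified Lean document; each statement's English description precedes it below -/
import Mathlib

section
/- Let s > 2 and let n = ⌊s⌋ so that n ≤ s < n+1. Then there exists a sequence m : ℕ → ℕ with m_i ∈ {n, n+1} for all i and, for every i ≥ 1, (n/(n+1)) · ∏_{j=1}^{i} (1/m_j) ≤ 1/s^i ≤ ((n+1)/n) · ∏_{j=1}^{i} (1/m_j). -/
/-!
Choose the factors greedily so that the ratio `r_i = s^i / (m_1 ⋯ m_i)` stays in
`[a/b, b/a]`, where `a = n ≤ s ≤ b = n+1`: if `r_i s ≤ b`, divide by `a` (the ratio grows, but not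
past `b/a`); otherwise divide by `b` (the ratio shrinks, but stays above `1`).
The stated bounds are those on `1 / r_i`, and the interval is symmetric under inversion.
-/

open Finset

noncomputable def greedyFactor (a b s r : ℝ) : ℝ := if r * s ≤ b then a else b

lemma greedyFactor_eq_or (a b s r : ℝ) : greedyFactor a b s r = a ∨ greedyFactor a b s r = b := by
  unfold greedyFactor
  split_ifs
  exacts [Or.inl rfl, Or.inr rfl]

lemma div_mul_le_one_div_and_one_div_le_div_mul {a b x y : ℝ} (ha : 0 < a) (hb : 0 < b)
    (hx : 0 < x) (h : x * y ∈ Set.Icc (a / b) (b / a)) :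
    a / b * y ≤ 1 / x ∧ 1 / x ≤ b / a * y := by
  obtain ⟨h_lo, h_hi⟩ := h
  rw [le_div_iff₀ ha] at h_hi
  rw [div_le_iff₀ hb] at h_lo
  constructor
  · rw [le_div_iff₀ hx, div_mul_eq_mul_div, div_mul_eq_mul_div, div_le_one hb]
    linarith
  · rw [div_le_iff₀ hx, div_mul_eq_mul_div, div_mul_eq_mul_div, le_div_iff₀ ha]
    linarith

section Greedy

variable {a b s : ℝ}

lemma mapsTo_mul_div_greedyFactor (ha : 0 < a) (has : a ≤ s) (hsb : s ≤ b) :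
    Set.MapsTo (fun r ↦ r * s / greedyFactor a b s r) (Set.Icc (a / b) (b / a))
      (Set.Icc (a / b) (b / a)) := by
  have hb : 0 < b := ha.trans_le (has.trans hsb)
  rintro r ⟨hr_lo, hr_hi⟩
  have hr : 0 < r := (div_pos ha hb).trans_le hr_lo
  show r * s / greedyFactor a b s r ∈ _
  unfold greedyFactor
  split_ifs with h
  · refine ⟨hr_lo.trans ?_, div_le_div_of_nonneg_right h ha.le⟩
    rw [le_div_iff₀ ha]
    exact mul_le_mul_of_nonneg_left has hr.le
  · rw [not_le] at h
    refine ⟨(div_le_one hb).2 (has.trans hsb) |>.trans ((one_lt_div hb).2 h).le, ?_⟩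
    rw [div_le_iff₀ hb]
    exact (mul_le_mul_of_nonneg_left hsb hr.le).trans (mul_le_mul_of_nonneg_right hr_hi hb.le)

theorem exists_two_valued_seq_pow_mul_prod_inv_mem_Icc (ha : 0 < a) (has : a ≤ s)
    (hsb : s ≤ b) :
    ∃ m : ℕ → ℝ, (∀ i, m i = a ∨ m i = b) ∧
      ∀ i, s ^ i * ∏ j ∈ Icc 1 i, (m j)⁻¹ ∈ Set.Icc (a / b) (b / a) := by
  have hb : 0 < b := ha.trans_le (has.trans hsb)
  set T : ℝ → ℝ := fun r ↦ r * s / greedyFactor a b s r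
  refine ⟨fun i ↦ greedyFactor a b s (T^[i - 1] 1), fun i ↦ greedyFactor_eq_or .., ?_⟩
  have h_orbit : ∀ i, s ^ i * ∏ j ∈ Icc 1 i, (greedyFactor a b s (T^[j - 1] 1))⁻¹ = T^[i] 1 := by
    intro i
    induction i with
    | zero => simp
    | succ i ih =>
      rw [prod_Icc_succ_top (by omega), Nat.add_sub_cancel, Function.iterate_succ_apply', pow_succ]
      generalize T^[i] 1 = x at ih ⊢
      subst ih
      simp only [T]
      ring
  have h_one : (1 : ℝ) ∈ Set.Icc (a / b) (b / a) :=
    ⟨(div_le_one hb).2 (has.trans hsb), (one_le_div ha).2 (has.trans hsb)⟩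
  intro i
  rw [h_orbit]
  exact (mapsTo_mul_div_greedyFactor ha has hsb).iterate i h_one

end Greedy

/-- For `s > 2` with `n ≤ s < n+1`, there is a sequence `m` with `m i ∈ {n, n+1}` satisfying
`(n/(n+1)) ∏_{j=1}^i m_j⁻¹ ≤ s⁻ⁱ ≤ ((n+1)/n) ∏_{j=1}^i m_j⁻¹` for every `i ≥ 1`. -/
theorem laakso_sequence_exists (s : ℝ) (hs : 2 < s) (n : ℕ)
    (hn₁ : (n : ℝ) ≤ s) (hn₂ : s < (n : ℝ) + 1) :
    ∃ m : ℕ → ℕ, (∀ i, m i = n ∨ m i = n + 1) ∧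
      ∀ i, 1 ≤ i →
        ((n : ℝ) / ((n : ℝ) + 1)) * ∏ j ∈ Finset.Icc 1 i, ((m j : ℝ))⁻¹ ≤ 1 / s ^ i ∧
        1 / s ^ i ≤ (((n : ℝ) + 1) / (n : ℝ)) * ∏ j ∈ Finset.Icc 1 i, ((m j : ℝ))⁻¹ := by
  have hn : (0 : ℝ) < n := by linarith
  obtain ⟨m, hm, h_bounds⟩ := exists_two_valued_seq_pow_mul_prod_inv_mem_Icc hn hn₁ hn₂.le
  have h_cast : ∀ i, ((if m i = n then n else n + 1 : ℕ) : ℝ) = m i := fun i ↦ by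
    rcases hm i with h | h <;> simp [h]
  refine ⟨fun i ↦ if m i = n then n else n + 1, fun i ↦ by dsimp only; split_ifs <;> simp,
    fun i _ ↦ ?_⟩
  simp only [h_cast]
  exact div_mul_le_one_div_and_one_div_le_div_mul hn (by positivity) (by positivity) (h_bounds i)
end

section
/- For s = 3 (n = 3), a sequence m with m_i ∈ {3,4} satisfies (3/4)∏_{j=1}^{i} m_j^{-1} ≤ 3^{-i} ≤ (4/3)∏_{j=1}^{i} m_j^{-1} for all i if and only if m_i = 3 for all but at most one index i. -/
/-! Writing `∏_{j ≤ i} m_j = 3^i (4/3)^c` with `c` the number of `j ≤ i` where `m_j = 4`,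
the two bounds at `i` say `3/4 ≤ (4/3)^c ≤ 4/3`, i.e. `c ≤ 1`. -/

open Finset

lemma prod_natCast_eq_three_pow_mul {s : Finset ℕ} {m : ℕ → ℕ}
    (hm : ∀ j ∈ s, m j = 3 ∨ m j = 4) :
    ∏ j ∈ s, (m j : ℝ) = 3 ^ #s * (4 / 3) ^ #{j ∈ s | m j ≠ 3} := by
  have hratio : ∏ j ∈ s, (m j / 3 : ℝ) = (4 / 3) ^ #{j ∈ s | m j ≠ 3} := by
    rw [← prod_const, prod_filter]
    refine prod_congr rfl fun j hj => ?_
    rcases hm j hj with h | h <;> simp [h]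
  rw [← hratio, ← prod_const, ← prod_mul_distrib]
  exact prod_congr rfl fun j _ => by ring

lemma mul_inv_mul_le_inv_and_inv_le_mul_inv_mul_iff {a b x r : ℝ} (hx : 0 < x) (hr : 0 < r) :
    (a * (x * r)⁻¹ ≤ 1 / x ∧ 1 / x ≤ b * (x * r)⁻¹) ↔ a ≤ r ∧ r ≤ b := by
  have hxr : a * (x * r)⁻¹ = a / r / x := by field_simp
  have hxr' : b * (x * r)⁻¹ = b / r / x := by field_simp
  rw [hxr, hxr', div_le_div_iff_of_pos_right hx, div_le_div_iff_of_pos_right hx,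
    div_le_one hr, one_le_div hr]

lemma three_quarters_le_and_le_four_thirds_pow_iff (c : ℕ) :
    (3 / 4 ≤ (4 / 3 : ℝ) ^ c ∧ (4 / 3 : ℝ) ^ c ≤ 4 / 3) ↔ c ≤ 1 := by
  have hlow : (3 / 4 : ℝ) ≤ (4 / 3) ^ c := le_trans (by norm_num) (one_le_pow₀ (by norm_num))
  rw [and_iff_right hlow, ← pow_le_pow_iff_right₀ (by norm_num : (1 : ℝ) < 4 / 3), pow_one]

lemma forall_card_filter_Icc_le_one_iff (p : ℕ → Prop) [DecidablePred p] :
    (∀ i, 1 ≤ i → #{j ∈ Icc 1 i | p j} ≤ 1) ↔ {i | 1 ≤ i ∧ p i}.Subsingleton := by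
  constructor
  · rintro h a ⟨ha, hpa⟩ b ⟨hb, hpb⟩
    refine card_le_one.mp (h (max a b) (ha.trans (le_max_left a b))) a ?_ b ?_
    · simp [ha, hpa]
    · simp [hb, hpb]
  · intro h i _
    refine card_le_one.mpr fun a ha b hb => ?_
    simp only [mem_filter, mem_Icc] at ha hb
    exact h ⟨ha.1.1, ha.2⟩ ⟨hb.1.1, hb.2⟩

/-- For `s = 3` (so `n = 3`), a sequence `m` with values in `{3,4}` satisfies
`(3/4) ∏_{j=1}^i m_j⁻¹ ≤ 3⁻ⁱ ≤ (4/3) ∏_{j=1}^i m_j⁻¹` for all `i ≥ 1` if and only if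
`m_i = 3` for all but at most one index `i ≥ 1`. -/
theorem laakso_sequence_three (m : ℕ → ℕ) (hm : ∀ i, 1 ≤ i → m i = 3 ∨ m i = 4) :
    (∀ i, 1 ≤ i →
        (3/4 : ℝ) * ∏ j ∈ Finset.Icc 1 i, ((m j : ℝ))⁻¹ ≤ 1 / 3 ^ i ∧
        (1 / 3 ^ i : ℝ) ≤ (4/3 : ℝ) * ∏ j ∈ Finset.Icc 1 i, ((m j : ℝ))⁻¹) ↔
      {i : ℕ | 1 ≤ i ∧ m i ≠ 3}.Subsingleton := by
  rw [← forall_card_filter_Icc_le_one_iff]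
  refine forall₂_congr fun i _ => ?_
  have hm' : ∀ j ∈ Icc 1 i, m j = 3 ∨ m j = 4 := fun j hj => hm j (mem_Icc.mp hj).1
  rw [prod_inv_distrib, prod_natCast_eq_three_pow_mul hm', Nat.card_Icc, Nat.add_sub_cancel,
    mul_inv_mul_le_inv_and_inv_le_mul_inv_mul_iff (by positivity) (by positivity),
    three_quarters_le_and_le_four_thirds_pow_iff]
end

section
/- In the Laakso space with s = 3 and m_i ≡ 3, the distance between x = [0,0] and y = [1,1] equals 1; moreover the infinite monotone path whose lift consists of the vertical segments {Σ_{i=1}^{j} 2/3^i} × [Σ_{i=1}^{j} 1/3^i, Σ_{i=1}^{j+1} 1/3^i] for j ≥ 0 together with {1} × [1/2, 1] has total H¹-length Σ_{i≥1} 1/3^i + 1/2 = 1. -/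
open Set MeasureTheory
open scoped ENNReal

noncomputable section

/-- The Cantor-type attractor of the IFS `f₀ x = x/s`, `f₁ x = x/s + (s-1)/s`. -/
def cantorF (s : ℝ) : Set ℝ :=
  {x | ∃ a : ℕ → Bool, x = ∑' i : ℕ, (if a i then (s - 1) / s ^ (i + 1) else 0)}

/-- The set of wormhole levels of order `k` for the sequence `m`. -/
def wormholeJ (m : ℕ → ℕ) (k : ℕ) : Set ℝ :=
  {x | ∃ n : ℕ → ℕ, (∀ j, 1 ≤ j → j < k → n j < m j) ∧ 1 ≤ n k ∧ n k < m k ∧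
    x = ∑ j ∈ Finset.Icc 1 k, (n j : ℝ) * ∏ h ∈ Finset.Icc 1 j, ((m h : ℝ))⁻¹}

/-- The base space `F × [0,1]`. -/
abbrev LaaksoBase (s : ℝ) : Type :=
  {p : ℝ × ℝ // p.1 ∈ cantorF s ∧ p.2 ∈ Icc (0:ℝ) 1}

/-- The identification relation defining the Laakso space. -/
def laaksoRel (s : ℝ) (m : ℕ → ℕ) (p q : LaaksoBase s) : Prop :=
  p = q ∨ ∃ k : ℕ, 1 ≤ k ∧ (p : ℝ × ℝ).2 = (q : ℝ × ℝ).2 ∧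
    (p : ℝ × ℝ).2 ∈ wormholeJ m k ∧ |(p : ℝ × ℝ).1 - (q : ℝ × ℝ).1| = (s - 1) / s ^ k

/-- The Laakso space `L = (F × [0,1]) / ∼`, with the quotient topology. -/
abbrev Laakso (s : ℝ) (m : ℕ → ℕ) : Type := Quot (laaksoRel s m)

/-- The projection `π : F × [0,1] → L`. -/
def laaksoPi (s : ℝ) (m : ℕ → ℕ) : LaaksoBase s → Laakso s m := Quot.mk _

/-- The height function `h : L → [0,1]`. -/
def heightL (s : ℝ) (m : ℕ → ℕ) : Laakso s m → ℝ :=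
  Quot.lift (fun p => (p : ℝ × ℝ).2) (by
    rintro p q (rfl | ⟨k, -, h2, -⟩)
    · rfl
    · exact h2)

instance (s : ℝ) : MeasurableSpace (LaaksoBase s) := borel _
instance (s : ℝ) : BorelSpace (LaaksoBase s) := ⟨rfl⟩

/-- The distance on the Laakso space: the infimum of `H¹`-measures of lifts `Γ ⊆ F × [0,1]`
whose projection is (the image of) a path joining the two points. -/
def laaksoDist (s : ℝ) (m : ℕ → ℕ) (x y : Laakso s m) : ℝ≥0∞ :=
  ⨅ (Γ : Set (LaaksoBase s)) (_ : ∃ p : Path x y,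
    laaksoPi s m '' Γ = Set.range p), μH[1] Γ

end

lemma zero_mem_cantorF : (0:ℝ) ∈ cantorF 3 := by
  refine ⟨fun _ => false, ?_⟩
  simp

lemma one_mem_cantorF : (1:ℝ) ∈ cantorF 3 := by
  refine ⟨fun _ => true, ?_⟩
  have h : ∀ i : ℕ, (if (true : Bool) then ((3:ℝ) - 1) / 3 ^ (i + 1) else 0)
      = (2/3) * (1/3) ^ i := by
    intro i
    simp [pow_succ, div_eq_mul_inv]
    ring
  rw [tsum_congr h, tsum_mul_left, tsum_geometric_of_lt_one (by norm_num) (by norm_num)]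
  norm_num

noncomputable section

/-- The `j`-th vertical segment `{Σ_{i=1}^j 2/3^i} × [Σ_{i=1}^j 1/3^i, Σ_{i=1}^{j+1} 1/3^i]`
of the lift of the infinite monotone path from `[0,0]` to `[1,1]`. -/
def seg (j : ℕ) : Set (LaaksoBase 3) :=
  {p | (p : ℝ × ℝ).1 = ∑ i ∈ Finset.Icc 1 j, 2 / 3 ^ i ∧
    (p : ℝ × ℝ).2 ∈ Icc (∑ i ∈ Finset.Icc 1 j, (1:ℝ) / 3 ^ i)
      (∑ i ∈ Finset.Icc 1 (j + 1), (1:ℝ) / 3 ^ i)}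

/-- The lift of the infinite monotone path: the countable union of the vertical segments
together with the final segment `{1} × [1/2, 1]`. -/
def infLift : Set (LaaksoBase 3) :=
  (⋃ j : ℕ, seg j) ∪ {p | (p : ℝ × ℝ).1 = 1 ∧ (p : ℝ × ℝ).2 ∈ Icc (1/2 : ℝ) 1}

end

/-!
Every point of `F × [0,1]` keeps its height under the identifications, so the height map
`L → [0,1]` is induced by the 1-Lipschitz projection `(x, t) ↦ t`. Along any path from height
`0` to height `1` it is onto `[0,1]`, hence every admissible lift has `H¹`-measure at least `1`.
Conversely the staircase lift climbs `[Σ_{i≤j} 3⁻ⁱ, Σ_{i≤j+1} 3⁻ⁱ]` at abscissa `Σ_{i≤j} 2·3⁻ⁱ`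
and passes to the next step through the order-`(j+1)` wormhole, whose ends lie `2·3^{-(j+1)}`
apart. By the union bound its measure is at most `Σ 3^{-(j+1)} + 1/2 = 1`, and being admissible
it has measure exactly `1`. Parametrised by height, the abscissa is the Cantor point whose `i`-th
ternary digit records whether the height has passed the order-`(i+1)` wormhole, so it tends to
`1` at height `1/2` and the path is continuous.
-/

open Filter Topology

local notation "π₃" => laaksoPi 3 (fun _ => 3)

noncomputable def cantorPoint (s : ℝ) (a : ℕ → Bool) : ℝ :=
  ∑' i : ℕ, (if a i then (s - 1) / s ^ (i + 1) else 0)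

section Cantor

variable {s : ℝ}

lemma cantorPoint_mem_cantorF (a : ℕ → Bool) : cantorPoint s a ∈ cantorF s := ⟨a, rfl⟩

lemma cantorPoint_decide_lt (hs : s ≠ 0) (j : ℕ) :
    cantorPoint s (fun i => decide (i < j)) = 1 - s⁻¹ ^ j := by
  rw [cantorPoint, tsum_eq_sum (s := Finset.range j) (fun i hi => by simp_all)]
  induction j with
  | zero => simp
  | succ j ih =>
    rw [Finset.sum_range_succ, Finset.sum_congr rfl fun i hi => ?_, ih]
    · simp only [lt_add_iff_pos_right, zero_lt_one, decide_true, if_true, inv_pow]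
      field_simp
      ring
    · simp [Finset.mem_range.1 hi, (Finset.mem_range.1 hi).trans (Nat.lt_succ_self j)]

lemma cantorPoint_true (hs : 1 < s) : cantorPoint s (fun _ => true) = 1 := by
  have hs0 : s ≠ 0 := by positivity
  have hs1 : s - 1 ≠ 0 := sub_ne_zero.2 hs.ne'
  have hgeom := (hasSum_geometric_of_lt_one (inv_nonneg.2 (by positivity))
    (inv_lt_one_of_one_lt₀ hs)).mul_left ((s - 1) / s)
  have hterm : (fun i : ℕ => (s - 1) / s * s⁻¹ ^ i) = fun i => (s - 1) / s ^ (i + 1) := by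
    ext i
    rw [inv_pow, pow_succ]
    field_simp
  have hsum : (s - 1) / s * (1 - s⁻¹)⁻¹ = 1 := by
    field_simp
  rw [hterm, hsum] at hgeom
  simpa [cantorPoint] using hgeom.tsum_eq

end Cantor

section Height

variable {s : ℝ} {m : ℕ → ℕ}

@[simp]
lemma heightL_laaksoPi (p : LaaksoBase s) : heightL s m (laaksoPi s m p) = (p : ℝ × ℝ).2 := rfl

lemma continuous_heightL : Continuous (heightL s m) :=
  continuous_quot_lift _ (continuous_snd.comp continuous_subtype_val)

lemma Icc_heightL_subset_image {x y : Laakso s m} {Γ : Set (LaaksoBase s)} (p : Path x y)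
    (hΓ : laaksoPi s m '' Γ = range p) :
    Icc (heightL s m x) (heightL s m y) ⊆ (fun q : LaaksoBase s => (q : ℝ × ℝ).2) '' Γ := by
  have h := ((isConnected_range p.continuous).image _
    continuous_heightL.continuousOn).isPreconnected.Icc_subset
    (mem_image_of_mem _ ⟨0, p.source⟩) (mem_image_of_mem _ ⟨1, p.target⟩)
  rwa [← hΓ, image_image] at h

lemma ofReal_heightL_sub_le_hausdorffMeasure {x y : Laakso s m} {Γ : Set (LaaksoBase s)}
    (p : Path x y) (hΓ : laaksoPi s m '' Γ = range p) :
    ENNReal.ofReal (heightL s m y - heightL s m x) ≤ μH[1] Γ := by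
  have hlip : LipschitzWith 1 (fun q : LaaksoBase s => (q : ℝ × ℝ).2) :=
    LipschitzWith.mk_one fun a b => by
      simpa only [Subtype.dist_eq, Prod.dist_eq] using le_max_right _ _
  calc ENNReal.ofReal (heightL s m y - heightL s m x)
      = μH[1] (Icc (heightL s m x) (heightL s m y)) := by
        rw [hausdorffMeasure_real, Real.volume_Icc]
    _ ≤ μH[1] ((fun q : LaaksoBase s => (q : ℝ × ℝ).2) '' Γ) :=
        measure_mono (Icc_heightL_subset_image p hΓ)
    _ ≤ μH[1] Γ := by simpa using hlip.hausdorffMeasure_image_le zero_le_one Γ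

lemma ofReal_heightL_sub_le_laaksoDist (x y : Laakso s m) :
    ENNReal.ofReal (heightL s m y - heightL s m x) ≤ laaksoDist s m x y :=
  le_iInf₂ fun _ ⟨p, hΓ⟩ => ofReal_heightL_sub_le_hausdorffMeasure p hΓ

lemma laaksoDist_le_hausdorffMeasure {x y : Laakso s m} {Γ : Set (LaaksoBase s)} (p : Path x y)
    (hΓ : laaksoPi s m '' Γ = range p) : laaksoDist s m x y ≤ μH[1] Γ :=
  iInf₂_le Γ ⟨p, hΓ⟩

lemma hausdorffMeasure_vertical_le (x c d : ℝ) :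
    μH[1] {p : LaaksoBase s | (p : ℝ × ℝ).1 = x ∧ (p : ℝ × ℝ).2 ∈ Icc c d} ≤
      ENNReal.ofReal (d - c) := by
  rw [← isometry_subtype_coe.hausdorffMeasure_image (Or.inl zero_le_one), ← Real.volume_Icc,
    ← hausdorffMeasure_real]
  have hsub : Subtype.val '' {p : LaaksoBase s | (p : ℝ × ℝ).1 = x ∧ (p : ℝ × ℝ).2 ∈ Icc c d} ⊆
      Prod.mk x '' Icc c d := by
    rintro _ ⟨p, ⟨hx, ht⟩, rfl⟩
    exact ⟨_, ht, Prod.ext hx.symm rfl⟩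
  refine (measure_mono hsub).trans ?_
  simpa using (LipschitzWith.prodMk_left x).hausdorffMeasure_image_le zero_le_one (Icc c d)

end Height

lemma hasSum_one_div_three_pow_succ : HasSum (fun i : ℕ => (1 : ℝ) / 3 ^ (i + 1)) (1 / 2) := by
  have h := (hasSum_geometric_of_lt_one (r := (3 : ℝ)⁻¹) (by norm_num) (by norm_num)).mul_left 3⁻¹
  have hterm : (fun i : ℕ => (3 : ℝ)⁻¹ * 3⁻¹ ^ i) = fun i => 1 / 3 ^ (i + 1) := by
    ext i
    rw [← pow_succ', inv_pow, one_div]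
  rwa [hterm, show (3 : ℝ)⁻¹ * (1 - 3⁻¹)⁻¹ = 1 / 2 by norm_num] at h

noncomputable def wormholeLevel (k : ℕ) : ℝ := ∑ i ∈ Finset.Icc 1 k, (1 : ℝ) / 3 ^ i

lemma wormholeLevel_succ (k : ℕ) : wormholeLevel (k + 1) = wormholeLevel k + 1 / 3 ^ (k + 1) := by
  rw [wormholeLevel, wormholeLevel, Finset.sum_Icc_succ_top (by omega)]

lemma wormholeLevel_eq (k : ℕ) : wormholeLevel k = (1 - 3⁻¹ ^ k) / 2 := by
  induction k with
  | zero => simp [wormholeLevel]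
  | succ k ih =>
    rw [wormholeLevel_succ, ih, one_div, ← inv_pow, pow_succ]
    ring

lemma wormholeLevel_strictMono : StrictMono wormholeLevel :=
  strictMono_nat_of_lt_succ fun k => by
    rw [wormholeLevel_succ]
    exact lt_add_of_pos_right _ (by positivity)

lemma wormholeLevel_nonneg (k : ℕ) : 0 ≤ wormholeLevel k :=
  Finset.sum_nonneg fun _ _ => by positivity

lemma wormholeLevel_lt_half (k : ℕ) : wormholeLevel k < 1 / 2 := by
  rw [wormholeLevel_eq]
  have : (0 : ℝ) < 3⁻¹ ^ k := by positivity
  linarith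

lemma wormholeLevel_mem_wormholeJ (k : ℕ) :
    wormholeLevel k ∈ wormholeJ (fun _ => 3) k := by
  refine ⟨fun _ => 1, fun _ _ _ => by norm_num, le_rfl, by norm_num, ?_⟩
  refine Finset.sum_congr rfl fun j _ => ?_
  rw [Finset.prod_const, Nat.card_Icc]
  simp

lemma exists_wormholeLevel_le_lt {t : ℝ} (h0 : 0 ≤ t) (ht : t < 1 / 2) :
    ∃ j, wormholeLevel j ≤ t ∧ t < wormholeLevel (j + 1) := by
  classical
  have hex : ∃ j, t < wormholeLevel (j + 1) := by
    obtain ⟨n, hn⟩ := exists_pow_lt_of_lt_one (by linarith : (0 : ℝ) < 1 - 2 * t)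
      (by norm_num : (3 : ℝ)⁻¹ < 1)
    refine ⟨n, ?_⟩
    have : (3 : ℝ)⁻¹ ^ (n + 1) ≤ 3⁻¹ ^ n :=
      pow_le_pow_of_le_one (by norm_num) (by norm_num) (by omega)
    rw [wormholeLevel_eq]
    linarith
  refine ⟨Nat.find hex, ?_, Nat.find_spec hex⟩
  rcases h : Nat.find hex with _ | j
  · simpa [wormholeLevel] using h0
  · exact not_lt.1 (Nat.find_min hex (h ▸ Nat.lt_succ_self j))

lemma two_mul_wormholeLevel (j : ℕ) :
    2 * wormholeLevel j = cantorPoint 3 (fun i => decide (i < j)) := by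
  rw [cantorPoint_decide_lt three_ne_zero, wormholeLevel_eq]
  ring

lemma seg_eq (j : ℕ) : seg j = {p : LaaksoBase 3 | (p : ℝ × ℝ).1 = 2 * wormholeLevel j ∧
    (p : ℝ × ℝ).2 ∈ Icc (wormholeLevel j) (wormholeLevel (j + 1))} := by
  have h : ∑ i ∈ Finset.Icc 1 j, (2 : ℝ) / 3 ^ i = 2 * wormholeLevel j := by
    rw [wormholeLevel, Finset.mul_sum]
    exact Finset.sum_congr rfl fun _ _ => (mul_one_div _ _).symm
  simp only [seg, h]
  rfl

lemma laaksoPi_eq_of_wormhole {p q : LaaksoBase 3} (j : ℕ)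
    (hp : (p : ℝ × ℝ).1 = 2 * wormholeLevel (j + 1)) (hq : (q : ℝ × ℝ).1 = 2 * wormholeLevel j)
    (hpq : (p : ℝ × ℝ).2 = (q : ℝ × ℝ).2) (hlevel : (p : ℝ × ℝ).2 = wormholeLevel (j + 1)) :
    π₃ p = π₃ q := by
  refine Quot.sound <| Or.inr ⟨j + 1, by omega, hpq, hlevel ▸ wormholeLevel_mem_wormholeJ _, ?_⟩
  rw [hp, hq, wormholeLevel_succ]
  rw [abs_of_pos (by ring_nf; positivity)]
  ring

noncomputable def stairAbscissa (t : ℝ) : ℝ :=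
  cantorPoint 3 fun i => decide (wormholeLevel (i + 1) ≤ t)

lemma stairAbscissa_eq {j : ℕ} {t : ℝ} (h1 : wormholeLevel j ≤ t)
    (h2 : t < wormholeLevel (j + 1)) :
    stairAbscissa t = 2 * wormholeLevel j := by
  rw [two_mul_wormholeLevel, stairAbscissa]
  congr 1
  funext i
  refine decide_eq_decide.2 ⟨fun hi => ?_, fun hi => ?_⟩
  · exact Nat.succ_lt_succ_iff.1 (wormholeLevel_strictMono.lt_iff_lt.1 (hi.trans_lt h2))
  · exact (wormholeLevel_strictMono.monotone hi).trans h1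

lemma stairAbscissa_of_half_le {t : ℝ} (h : 1 / 2 ≤ t) : stairAbscissa t = 1 := by
  rw [stairAbscissa, ← cantorPoint_true (by norm_num : (1 : ℝ) < 3)]
  congr 1
  funext i
  exact decide_eq_true ((wormholeLevel_lt_half _).le.trans h)

lemma abs_stairAbscissa_sub_one_le {t : ℝ} (h0 : 0 ≤ t) :
    |stairAbscissa t - 1| ≤ 6 * max (1 / 2 - t) 0 := by
  rcases lt_or_ge t (1 / 2) with ht | ht
  · obtain ⟨j, h1, h2⟩ := exists_wormholeLevel_le_lt h0 ht
    rw [stairAbscissa_eq h1 h2]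
    rw [wormholeLevel_eq, pow_succ] at h2
    have hr : (0 : ℝ) < 3⁻¹ ^ j := by positivity
    rw [wormholeLevel_eq, abs_of_nonpos (by linarith)]
    have := le_max_left (1 / 2 - t) 0
    linarith
  · rw [stairAbscissa_of_half_le ht, sub_self, abs_zero]
    positivity

noncomputable def stairPoint (t : unitInterval) : LaaksoBase 3 :=
  ⟨(stairAbscissa t, t), cantorPoint_mem_cantorF _, t.2⟩

lemma laaksoPi_stairPoint_eq {j : ℕ} {t : unitInterval}
    (ht : (t : ℝ) ∈ Icc (wormholeLevel j) (wormholeLevel (j + 1))) {q : LaaksoBase 3}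
    (hq : (q : ℝ × ℝ) = (2 * wormholeLevel j, (t : ℝ))) : π₃ (stairPoint t) = π₃ q := by
  rcases ht.2.lt_or_eq with hlt | heq
  · exact congrArg π₃ (Subtype.ext (hq ▸ Prod.ext (stairAbscissa_eq ht.1 hlt) rfl))
  · refine laaksoPi_eq_of_wormhole j ?_ (by rw [hq]) (by rw [hq]; rfl) heq
    exact stairAbscissa_eq heq.ge (heq ▸ wormholeLevel_strictMono (Nat.lt_succ_self _))

lemma continuousOn_stairPoint_Icc (j : ℕ) :
    ContinuousOn (π₃ ∘ stairPoint)
      {t : unitInterval | (t : ℝ) ∈ Icc (wormholeLevel j) (wormholeLevel (j + 1))} := by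
  have hcont : Continuous fun t : unitInterval =>
      π₃ ⟨(2 * wormholeLevel j, t), two_mul_wormholeLevel j ▸ cantorPoint_mem_cantorF _, t.2⟩ :=
    continuous_quot_mk.comp ((continuous_const.prodMk continuous_subtype_val).subtype_mk _)
  exact hcont.continuousOn.congr fun t ht => laaksoPi_stairPoint_eq ht rfl

lemma continuousOn_stairPoint_Iic (j : ℕ) :
    ContinuousOn (π₃ ∘ stairPoint) {t : unitInterval | (t : ℝ) ≤ wormholeLevel (j + 1)} := by
  induction j with
  | zero =>
    refine (continuousOn_stairPoint_Icc 0).mono fun t ht => ⟨?_, ht⟩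
    simpa [wormholeLevel] using t.2.1
  | succ j ih =>
    refine (ih.union_of_isClosed (continuousOn_stairPoint_Icc (j + 1))
      (isClosed_le continuous_subtype_val continuous_const)
      (isClosed_Icc.preimage continuous_subtype_val)).mono fun t ht => ?_
    exact (le_total (t : ℝ) (wormholeLevel (j + 1))).imp id fun h => ⟨h, ht⟩

lemma continuousAt_stairPoint_of_lt_half {t : unitInterval} (ht : (t : ℝ) < 1 / 2) :
    ContinuousAt (π₃ ∘ stairPoint) t := by
  obtain ⟨j, -, hj⟩ := exists_wormholeLevel_le_lt t.2.1 ht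
  have hnhds : {u : unitInterval | (u : ℝ) < wormholeLevel (j + 1)} ∈ 𝓝 t :=
    (isOpen_lt continuous_subtype_val continuous_const).mem_nhds hj
  exact (continuousOn_stairPoint_Iic j).continuousAt
    (mem_of_superset hnhds fun _ => le_of_lt (b := wormholeLevel (j + 1)))

lemma continuousAt_stairPoint_of_half_le {t : unitInterval} (ht : 1 / 2 ≤ (t : ℝ)) :
    ContinuousAt (π₃ ∘ stairPoint) t := by
  have hbound : Tendsto (fun u : unitInterval => 6 * max (1 / 2 - (u : ℝ)) 0) (𝓝 t) (𝓝 0) := by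
    have : Continuous fun u : unitInterval => 6 * max (1 / 2 - (u : ℝ)) 0 := by fun_prop
    have := this.tendsto t
    rwa [max_eq_right (sub_nonpos.2 ht), mul_zero] at this
  have habs : ContinuousAt (fun u : unitInterval => stairAbscissa u) t := by
    rw [ContinuousAt, stairAbscissa_of_half_le ht, tendsto_iff_norm_sub_tendsto_zero]
    exact squeeze_zero (fun _ => norm_nonneg _) (fun u => abs_stairAbscissa_sub_one_le u.2.1)
      hbound
  exact continuous_quot_mk.continuousAt.comp <| Topology.IsInducing.subtypeVal.continuousAt_iff.2
    (habs.prodMk continuous_subtype_val.continuousAt)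

noncomputable def stairPath :
    Path (π₃ ⟨((0 : ℝ), 0), zero_mem_cantorF, by norm_num⟩)
      (π₃ ⟨((1 : ℝ), 1), one_mem_cantorF, by norm_num⟩) where
  toFun := π₃ ∘ stairPoint
  continuous_toFun := continuous_iff_continuousAt.2 fun t =>
    (lt_or_ge (t : ℝ) (1 / 2)).elim continuousAt_stairPoint_of_lt_half
      continuousAt_stairPoint_of_half_le
  source' := laaksoPi_stairPoint_eq (j := 0) ⟨by simp [wormholeLevel], wormholeLevel_nonneg 1⟩
    (by simp [wormholeLevel])
  target' := congrArg π₃ (Subtype.ext (Prod.ext (stairAbscissa_of_half_le (by norm_num)) rfl))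

lemma stairPoint_mem_infLift (t : unitInterval) : stairPoint t ∈ infLift := by
  rcases lt_or_ge (t : ℝ) (1 / 2) with ht | ht
  · obtain ⟨j, h1, h2⟩ := exists_wormholeLevel_le_lt t.2.1 ht
    refine Or.inl (mem_iUnion.2 ⟨j, ?_⟩)
    rw [seg_eq]
    exact ⟨stairAbscissa_eq h1 h2, h1, h2.le⟩
  · exact Or.inr ⟨stairAbscissa_of_half_le ht, ht, t.2.2⟩

lemma image_infLift_eq_range_stairPath : π₃ '' infLift = range stairPath := by
  refine Subset.antisymm ?_ (range_subset_iff.2 fun t => ⟨_, stairPoint_mem_infLift t, rfl⟩)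
  rintro _ ⟨q, hq | ⟨hx, ht⟩, rfl⟩
  · obtain ⟨j, hj⟩ := mem_iUnion.1 hq
    rw [seg_eq] at hj
    exact ⟨⟨_, q.2.2⟩, laaksoPi_stairPoint_eq hj.2 (Prod.ext hj.1 rfl)⟩
  · exact ⟨⟨_, q.2.2⟩, congrArg π₃
      (Subtype.ext (Prod.ext ((stairAbscissa_of_half_le ht.1).trans hx.symm) rfl))⟩

lemma hausdorffMeasure_infLift_le : μH[1] infLift ≤ 1 := by
  have hseg (j : ℕ) : μH[1] (seg j) ≤ ENNReal.ofReal (1 / 3 ^ (j + 1)) := by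
    rw [seg_eq]
    refine (hausdorffMeasure_vertical_le _ _ _).trans_eq ?_
    rw [wormholeLevel_succ, add_sub_cancel_left]
  calc μH[1] infLift
      ≤ ∑' j, μH[1] (seg j) + μH[1] {p : LaaksoBase 3 | (p : ℝ × ℝ).1 = 1 ∧
          (p : ℝ × ℝ).2 ∈ Icc (1 / 2 : ℝ) 1} :=
        (measure_union_le _ _).trans (add_le_add (measure_iUnion_le _) le_rfl)
    _ ≤ ∑' j, ENNReal.ofReal (1 / 3 ^ (j + 1)) + ENNReal.ofReal (1 - 1 / 2) :=
        add_le_add (ENNReal.tsum_le_tsum hseg) (hausdorffMeasure_vertical_le _ _ _)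
    _ = 1 := by
        rw [← ENNReal.ofReal_tsum_of_nonneg (fun _ => by positivity)
          hasSum_one_div_three_pow_succ.summable, hasSum_one_div_three_pow_succ.tsum_eq,
          ← ENNReal.ofReal_add (by norm_num) (by norm_num)]
        norm_num

/-- In the Laakso space with `s = 3` and `m_i ≡ 3`, the distance between `x = [0,0]` and
`y = [1,1]` equals `1`; the infinite monotone path with lift `infLift` joins the two points
and its total `H¹`-length is `Σ_{i≥1} 1/3^i + 1/2 = 1`. -/
theorem laakso_three_infinite_geodesic :
    laaksoDist 3 (fun _ => 3)
        (laaksoPi 3 (fun _ => 3) ⟨((0:ℝ), 0), zero_mem_cantorF, by norm_num⟩)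
        (laaksoPi 3 (fun _ => 3) ⟨((1:ℝ), 1), one_mem_cantorF, by norm_num⟩) = 1 ∧
    (∑' i : ℕ, (1:ℝ) / 3 ^ (i + 1)) + 1/2 = 1 ∧
    μH[1] infLift = 1 ∧
    ∃ p : Path
        (laaksoPi 3 (fun _ => 3) ⟨((0:ℝ), 0), zero_mem_cantorF, by norm_num⟩)
        (laaksoPi 3 (fun _ => 3) ⟨((1:ℝ), 1), one_mem_cantorF, by norm_num⟩),
      laaksoPi 3 (fun _ => 3) '' infLift = Set.range p ∧
      Monotone (fun t => heightL 3 (fun _ => 3) (p t)) := by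
  have hlower := ofReal_heightL_sub_le_laaksoDist (stairPath 0) (stairPath 1)
  norm_num at hlower
  have hupper := laaksoDist_le_hausdorffMeasure stairPath image_infLift_eq_range_stairPath
  refine ⟨le_antisymm (hupper.trans hausdorffMeasure_infLift_le) hlower, ?_,
    le_antisymm hausdorffMeasure_infLift_le (hlower.trans hupper), stairPath,
    image_infLift_eq_range_stairPath, fun _ _ h => h⟩
  rw [hasSum_one_div_three_pow_succ.tsum_eq]
  norm_num
end
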